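/- arXiv:0902.3491 — 6 statements merged into one kernel-verified Lean document; each statement's English description precedes it below -/
import Mathlib

section
/- Let q be a complex quadratic form on ℝ^{2n} with Hamilton map F, and let S = (⋂_{j=0}^{2n-1} Ker[Re F (Im F)^j]) ∩ ℝ^{2n} be its singular space. Then both the quadratic form Re q and the quadratic form H_{Im q}² Re q (whose Hamilton map is 4[Im F,[Im F, Re F]]) vanish identically on S. -/
/-!
Only the conditions `F₁ X = 0` and `F₁ F₂ X = 0` matter. They kill every term of the double
commutator applied to `X` except `F₁ F₂² X`, and `σ(X, F₁ F₂² X) = σ(F₂² X, F₁ X) = 0` by the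
symmetry of `F₁` with respect to `σ`.
-/

open scoped BigOperators

/-- The canonical symplectic form on `ℝ^{2n}`: `σ((x,ξ),(y,η)) = ξ·y − x·η`. -/
def sigmaR (n : ℕ) (X Y : (Fin n → ℝ) × (Fin n → ℝ)) : ℝ :=
  (∑ i, X.2 i * Y.1 i) - ∑ i, X.1 i * Y.2 i

theorem Module.End.doubleCommutator_apply_of_apply_eq_zero {R M : Type*} [Semiring R]
    [AddCommGroup M] [Module R M] (A B : Module.End R M) {x : M} (hx : A x = 0)
    (hBx : A (B x) = 0) :
    (B * (B * A - A * B) - (B * A - A * B) * B) x = A (B (B x)) := by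
  simp [Module.End.mul_apply, hx, hBx]

lemma sigmaR_zero_right (n : ℕ) (X : (Fin n → ℝ) × (Fin n → ℝ)) : sigmaR n X 0 = 0 := by
  simp [sigmaR]

lemma sigmaR_apply_eq_zero_of_apply_eq_zero {n : ℕ}
    {F : ((Fin n → ℝ) × (Fin n → ℝ)) →ₗ[ℝ] ((Fin n → ℝ) × (Fin n → ℝ))}
    (hF : ∀ X Y, sigmaR n X (F Y) = sigmaR n Y (F X)) {X : (Fin n → ℝ) × (Fin n → ℝ)}
    (hX : F X = 0) (Y : (Fin n → ℝ) × (Fin n → ℝ)) : sigmaR n X (F Y) = 0 := by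
  rw [hF, hX, sigmaR_zero_right]

theorem stmt_3_general (n : ℕ)
    (F₁ F₂ : ((Fin n → ℝ) × (Fin n → ℝ)) →ₗ[ℝ] ((Fin n → ℝ) × (Fin n → ℝ)))
    (hF₁ : ∀ X Y, sigmaR n X (F₁ Y) = sigmaR n Y (F₁ X))
    (X : (Fin n → ℝ) × (Fin n → ℝ))
    (hX : ∀ j < 2 * n, F₁ ((F₂ ^ j) X) = 0) :
    sigmaR n X (F₁ X) = 0 ∧
      sigmaR n X (((4 : ℝ) • (F₂ * (F₂ * F₁ - F₁ * F₂) - (F₂ * F₁ - F₁ * F₂) * F₂)) X) = 0 := by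
  -- For `n = 0` the phase space is a point; otherwise `j = 0, 1` are among the `2 * n` indices.
  have hX_low : ∀ j < 2, F₁ ((F₂ ^ j) X) = 0 := by
    intro j hj
    rcases Nat.eq_zero_or_pos n with rfl | hn
    · exact Subsingleton.elim _ _
    · exact hX j (by omega)
  have hX₀ : F₁ X = 0 := by simpa using hX_low 0 two_pos
  have hX₁ : F₁ (F₂ X) = 0 := by simpa using hX_low 1 one_lt_two
  refine ⟨sigmaR_apply_eq_zero_of_apply_eq_zero hF₁ hX₀ X, ?_⟩
  rw [LinearMap.smul_apply, Module.End.doubleCommutator_apply_of_apply_eq_zero _ _ hX₀ hX₁,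
    ← map_smul]
  exact sigmaR_apply_eq_zero_of_apply_eq_zero hF₁ hX₀ _

/-- Let `q` be a complex quadratic form on `ℝ^{2n}` with Hamilton map `F = F₁ + i F₂`
(the real parts `F₁ = Re F`, `F₂ = Im F` being the Hamilton maps of `Re q`, `Im q`, so that
`σ(X, Fᵢ Y) = σ(Y, Fᵢ X)`).  If `X` lies in the singular space
`S = ⋂_{j=0}^{2n-1} Ker[Re F (Im F)^j]`, then both `Re q(X) = σ(X, F₁ X)` and the quadratic
form `H_{Im q}² Re q`, whose Hamilton map is `4[Im F,[Im F, Re F]]`, vanish at `X`. -/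
theorem stmt_3 (n : ℕ)
    (F₁ F₂ : ((Fin n → ℝ) × (Fin n → ℝ)) →ₗ[ℝ] ((Fin n → ℝ) × (Fin n → ℝ)))
    (hF₁ : ∀ X Y, sigmaR n X (F₁ Y) = sigmaR n Y (F₁ X))
    (hF₂ : ∀ X Y, sigmaR n X (F₂ Y) = sigmaR n Y (F₂ X))
    (X : (Fin n → ℝ) × (Fin n → ℝ))
    (hX : ∀ j < 2 * n, F₁ ((F₂ ^ j) X) = 0) :
    sigmaR n X (F₁ X) = 0 ∧
      sigmaR n X (((4 : ℝ) • (F₂ * (F₂ * F₁ - F₁ * F₂) - (F₂ * F₁ - F₁ * F₂) * F₂)) X) = 0 :=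
  stmt_3_general n F₁ F₂ hF₁ X hX
end

section
/- Let a and b be C¹ vector fields on ℝ^{2n} with b linear, |a(X)| ≤ C|X|, |b(X)| ≤ C|X|, and |a(X) − b(X)| ≤ C'|X|² for all X. Then there exists c̃ > 0 such that for all 0 ≤ t ≤ T and X ∈ ℝ^{2n}, the flows satisfy |φ_a^t(X) − φ_b^t(X)| ≤ c̃ t |X|², where φ_a^t, φ_b^t are the flows of a and b. -/
open Real Set

/-!
Along `φ_a`, Grönwall's inequality for `‖a X‖ ≤ C‖X‖` gives `‖φ_a^s X‖ ≤ e^{C⁺T} ‖X‖`, so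
`φ_a^s X` solves `Y' = b Y` up to an error `‖a - b‖ ≤ C'⁺ e^{2C⁺T} ‖X‖²`.  Comparing this approximate
trajectory of the `C⁺`-Lipschitz field `b` with the exact one `φ_b^s X` (Grönwall again) bounds
their distance at time `t` by that error times `t e^{C⁺t}`.
-/

lemma gronwallBound_le_mul_exp {δ K ε x : ℝ} (hK : 0 ≤ K) (hε : 0 ≤ ε) :
    gronwallBound δ K ε x ≤ (δ + ε * x) * exp (K * x) := by
  rcases hK.eq_or_lt with rfl | hK
  · simp [gronwallBound_K0]
  rw [gronwallBound_of_K_ne_0 hK.ne', add_mul]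
  gcongr δ * exp (K * x) + ?_
  have hexp : exp (K * x) - 1 ≤ K * x * exp (K * x) := by
    have h := mul_le_mul_of_nonneg_right (one_sub_le_exp_neg (K * x)) (exp_pos (K * x)).le
    rw [← exp_add, neg_add_cancel, exp_zero] at h
    linarith
  calc ε / K * (exp (K * x) - 1) ≤ ε / K * (K * x * exp (K * x)) := by gcongr
    _ = ε * x * exp (K * x) := by field_simp

variable {E : Type*} [NormedAddCommGroup E] [NormedSpace ℝ E]

lemma norm_le_mul_exp_of_hasDerivAt {v : E → E} {K : ℝ} (hv : ∀ x, ‖v x‖ ≤ K * ‖x‖)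
    {f : ℝ → E} (hf : ∀ t, HasDerivAt f (v (f t)) t) {t : ℝ} (ht : 0 ≤ t) :
    ‖f t‖ ≤ ‖f 0‖ * exp (K * t) := by
  have h := norm_le_gronwallBound_of_norm_deriv_right_le (a := 0) (b := t) (ε := 0)
    (fun s _ => (hf s).continuousAt.continuousWithinAt) (fun s _ => (hf s).hasDerivWithinAt)
    le_rfl (fun s _ => by simpa using hv (f s)) t ⟨ht, le_rfl⟩
  rwa [sub_zero, gronwallBound_ε0] at h

lemma dist_le_of_approx_trajectory {a b : E → E} {K : NNReal} (hb : LipschitzWith K b)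
    {f g : ℝ → E} (hf : ∀ t, HasDerivAt f (a (f t)) t) (hg : ∀ t, HasDerivAt g (b (g t)) t)
    (h0 : f 0 = g 0) {ε T : ℝ} (hab : ∀ s ∈ Icc 0 T, dist (a (f s)) (b (f s)) ≤ ε) :
    ∀ t ∈ Icc 0 T, dist (f t) (g t) ≤ ε * t * exp (K * t) := by
  intro t ht
  have hε : 0 ≤ ε := dist_nonneg.trans (hab 0 ⟨le_rfl, ht.1.trans ht.2⟩)
  have h := dist_le_of_approx_trajectories_ODE (v := fun _ => b) (εg := 0) (δ := 0)
    (fun _ => hb) (fun s _ => (hf s).continuousAt.continuousWithinAt)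
    (fun s _ => (hf s).hasDerivWithinAt) (fun s hs => hab s (Ico_subset_Icc_self hs))
    (fun s _ => (hg s).continuousAt.continuousWithinAt) (fun s _ => (hg s).hasDerivWithinAt)
    (fun s _ => (dist_self _).le) (by rw [h0, dist_self]) t ht
  rw [add_zero, sub_zero] at h
  simpa using h.trans (gronwallBound_le_mul_exp K.2 hε)

theorem stmt_7_general (n : ℕ) (C C' T : ℝ)
    (a : EuclideanSpace ℝ (Fin (2 * n)) → EuclideanSpace ℝ (Fin (2 * n)))
    (b : EuclideanSpace ℝ (Fin (2 * n)) →ₗ[ℝ] EuclideanSpace ℝ (Fin (2 * n)))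
    (haC : ∀ X, ‖a X‖ ≤ C * ‖X‖)
    (hbC : ∀ X, ‖b X‖ ≤ C * ‖X‖)
    (hab : ∀ X, ‖a X - b X‖ ≤ C' * ‖X‖ ^ 2)
    (φa φb : ℝ → EuclideanSpace ℝ (Fin (2 * n)) → EuclideanSpace ℝ (Fin (2 * n)))
    (hφa0 : ∀ X, φa 0 X = X) (hφb0 : ∀ X, φb 0 X = X)
    (hφa : ∀ t X, HasDerivAt (fun s => φa s X) (a (φa t X)) t)
    (hφb : ∀ t X, HasDerivAt (fun s => φb s X) (b (φb t X)) t) :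
    ∃ ctilde > 0, ∀ t, 0 ≤ t → t ≤ T → ∀ X, ‖φa t X - φb t X‖ ≤ ctilde * t * ‖X‖ ^ 2 := by
  set K : ℝ := max C 0
  set K' : ℝ := max C' 0
  have hK : 0 ≤ K := le_max_right _ _
  have hK' : 0 ≤ K' := le_max_right _ _
  refine ⟨K' * exp (3 * (K * T)) + 1, by positivity, fun t ht0 htT X => ?_⟩
  have hgrowth : ∀ s ∈ Icc 0 T, ‖φa s X‖ ≤ ‖X‖ * exp (K * T) := fun s hs => by
    refine (norm_le_mul_exp_of_hasDerivAt (K := K) (fun Y => (haC Y).trans ?_) (hφa · X)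
      hs.1).trans ?_
    · gcongr; exact le_max_left _ _
    · rw [hφa0]; gcongr; exact hs.2
  have herror : ∀ s ∈ Icc 0 T, dist (a (φa s X)) (b (φa s X)) ≤ K' * (‖X‖ * exp (K * T)) ^ 2 :=
    fun s hs => by
      rw [dist_eq_norm]
      refine (hab _).trans ?_
      gcongr
      exacts [le_max_left _ _, hgrowth s hs]
  have hb : LipschitzWith C.toNNReal b := AddMonoidHomClass.lipschitz_of_bound b C hbC
  have h := dist_le_of_approx_trajectory hb (hφa · X) (hφb · X) (by rw [hφa0, hφb0]) herror
    t ⟨ht0, htT⟩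
  rw [dist_eq_norm, Real.coe_toNNReal'] at h
  calc ‖φa t X - φb t X‖ ≤ K' * (‖X‖ * exp (K * T)) ^ 2 * t * exp (K * t) := h
    _ ≤ K' * (‖X‖ * exp (K * T)) ^ 2 * t * exp (K * T) := by gcongr
    _ = K' * exp (3 * (K * T)) * t * ‖X‖ ^ 2 := by
      rw [show 3 * (K * T) = K * T + K * T + K * T by ring, exp_add, exp_add]; ring
    _ ≤ (K' * exp (3 * (K * T)) + 1) * t * ‖X‖ ^ 2 := by gcongr; linarith

/-- Let `a` and `b` be `C¹` vector fields on `ℝ^{2n}` with `b` linear,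
`|a(X)| ≤ C|X|`, `|b(X)| ≤ C|X|` and `|a(X) − b(X)| ≤ C'|X|²`.  Then there is `c̃ > 0`
such that for all `0 ≤ t ≤ T` and all `X`, the flows satisfy
`|φ_a^t(X) − φ_b^t(X)| ≤ c̃ t |X|²`. -/
theorem stmt_7 (n : ℕ) (C C' T : ℝ) (hT : 0 < T)
    (a : EuclideanSpace ℝ (Fin (2 * n)) → EuclideanSpace ℝ (Fin (2 * n)))
    (b : EuclideanSpace ℝ (Fin (2 * n)) →ₗ[ℝ] EuclideanSpace ℝ (Fin (2 * n)))
    (ha : ContDiff ℝ 1 a)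
    (haC : ∀ X, ‖a X‖ ≤ C * ‖X‖)
    (hbC : ∀ X, ‖b X‖ ≤ C * ‖X‖)
    (hab : ∀ X, ‖a X - b X‖ ≤ C' * ‖X‖ ^ 2)
    (φa φb : ℝ → EuclideanSpace ℝ (Fin (2 * n)) → EuclideanSpace ℝ (Fin (2 * n)))
    (hφa0 : ∀ X, φa 0 X = X) (hφb0 : ∀ X, φb 0 X = X)
    (hφa : ∀ t X, HasDerivAt (fun s => φa s X) (a (φa t X)) t)
    (hφb : ∀ t X, HasDerivAt (fun s => φb s X) (b (φb t X)) t) :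
    ∃ ctilde > 0, ∀ t, 0 ≤ t → t ≤ T → ∀ X, ‖φa t X - φb t X‖ ≤ ctilde * t * ‖X‖ ^ 2 :=
  stmt_7_general n C C' T a b haC hbC hab φa φb hφa0 hφb0 hφa hφb
end

section
/- Let J : ℝ → ℝ be a compactly supported piecewise affine function with J'(t) = δ(t) − 1_{[-1,0]}(t) in the distributional sense, let q be a complex quadratic form on ℝ^{2n} with Re q ≥ 0, T > 0, and define G(X) = −∫_{-∞}^{+∞} J(−t/T) Re q(e^{tH_{Im q}}X) dt. Then H_{Im q}G = ⟨Re q⟩_{T,Im q} − Re q, where ⟨Re q⟩_{T,Im q}(X) = (1/T)∫₀^T Re q(e^{tH_{Im q}}X) dt. -/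
open MeasureTheory

/-- A compactly supported piecewise affine function solving `J'(t) = δ(t) − 1_{[-1,0]}(t)`
in the distributional sense: `J(t) = -(t+1)` on `[-1,0]` and `0` elsewhere. -/
noncomputable def Jfun : ℝ → ℝ := Set.indicator (Set.Icc (-1 : ℝ) 0) (fun s => -(s + 1))

/-!
Write `f u = Re q(e^{uH_{Im q}} X)`. By the flow property, `G(e^{sH_{Im q}} X)` is the integral of
`J(-t/T) f(t + s)`, and after the substitution `u = t + s` this is
`∫_s^{s+T} (1 - (u - s)/T) f(u) du = (1 + s/T) ∫_s^{s+T} f - (1/T) ∫_s^{s+T} u f(u) du`.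
Differentiating in `s` by the fundamental theorem of calculus, the boundary terms at `s + T`
cancel, and what remains is `(1/T) ∫_s^{s+T} f - f(s)`.
-/

open NormedSpace

theorem exp_add_smul {𝔸 : Type*} [NormedRing 𝔸] [NormedAlgebra ℝ 𝔸] [CompleteSpace 𝔸]
    (a : 𝔸) (t s : ℝ) : exp ((t + s) • a) = exp (t • a) * exp (s • a) := by
  rw [add_smul]
  exact exp_add_of_commute_of_mem_ball (𝕂 := ℝ) (((Commute.refl a).smul_left t).smul_right s)
    ((expSeries_radius_eq_top ℝ 𝔸).symm ▸ edist_lt_top _ _)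
    ((expSeries_radius_eq_top ℝ 𝔸).symm ▸ edist_lt_top _ _)

theorem Jfun_neg_div {T : ℝ} (hT : 0 < T) (t : ℝ) :
    Jfun (-t / T) = (Set.Icc 0 T).indicator (fun t => t / T - 1) t := by
  have hmem : -t / T ∈ Set.Icc (-1 : ℝ) 0 ↔ t ∈ Set.Icc 0 T := by
    simp only [Set.mem_Icc, neg_div, neg_le_neg_iff, neg_nonpos, div_le_one hT,
      div_nonneg_iff, hT.le, hT.not_ge, and_true, and_false, or_false]
    tauto
  by_cases ht : t ∈ Set.Icc 0 T
  · rw [Jfun, Set.indicator_of_mem (hmem.2 ht), Set.indicator_of_mem ht]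
    ring
  · rw [Jfun, Set.indicator_of_notMem (mt hmem.1 ht), Set.indicator_of_notMem ht]

section Shift

variable {f : ℝ → ℝ} (hf : Continuous f) {T : ℝ}
include hf

theorem hasDerivAt_intervalIntegral_self_add (s : ℝ) :
    HasDerivAt (fun s => ∫ u in s..s + T, f u) (f (s + T) - f s) s := by
  have hF : ∀ x, HasDerivAt (fun x => ∫ u in (0 : ℝ)..x, f u) (f x) x :=
    fun x => (hf.integral_hasStrictDerivAt 0 x).hasDerivAt
  have hsub : (fun s => ∫ u in s..s + T, f u)
      = fun s => (∫ u in (0 : ℝ)..s + T, f u) - ∫ u in (0 : ℝ)..s, f u := by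
    funext s
    exact (intervalIntegral.integral_interval_sub_left (hf.intervalIntegrable _ _)
      (hf.intervalIntegrable _ _)).symm
  rw [hsub]
  exact ((hF (s + T)).comp_add_const s T).sub (hF s)

variable (hT : 0 < T)
include hT

theorem neg_integral_Jfun_mul_comp_add (s : ℝ) :
    -∫ t, Jfun (-t / T) * f (t + s)
      = (s / T + 1) * (∫ u in s..s + T, f u) - T⁻¹ * ∫ u in s..s + T, u * f u := by
  have hg : Continuous fun u => u * f u := continuous_id.mul hf
  have hJ : ∀ t, Jfun (-t / T) * f (t + s)
      = (Set.Icc 0 T).indicator (fun t => (t / T - 1) * f (t + s)) t := by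
    intro t
    by_cases ht : t ∈ Set.Icc 0 T <;> simp [Jfun_neg_div hT, ht]
  have hshift := intervalIntegral.integral_comp_add_right (fun u => ((u - s) / T - 1) * f u) s
    (a := 0) (b := T)
  simp only [add_sub_cancel_right, zero_add, add_comm T s] at hshift
  have hsplit : ∀ u, ((u - s) / T - 1) * f u = T⁻¹ * (u * f u) - (s / T + 1) * f u := by
    intro u
    field_simp
    ring
  simp_rw [hJ]
  rw [integral_indicator measurableSet_Icc, integral_Icc_eq_integral_Ioc,
    ← intervalIntegral.integral_of_le hT.le, hshift]
  simp_rw [hsplit]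
  rw [intervalIntegral.integral_sub ((hg.intervalIntegrable _ _).const_mul _)
      ((hf.intervalIntegrable _ _).const_mul _),
    intervalIntegral.integral_const_mul, intervalIntegral.integral_const_mul]
  ring

theorem hasDerivAt_neg_integral_Jfun_mul_comp_add (s : ℝ) :
    HasDerivAt (fun s => -∫ t, Jfun (-t / T) * f (t + s))
      (T⁻¹ * (∫ u in s..s + T, f u) - f s) s := by
  have hg : Continuous fun u => u * f u := continuous_id.mul hf
  have hlin : HasDerivAt (fun s : ℝ => s / T + 1) T⁻¹ s := by
    simpa only [one_div] using ((hasDerivAt_id' s).div_const T).add_const 1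
  rw [funext (neg_integral_Jfun_mul_comp_add hf hT)]
  refine ((hlin.mul (hasDerivAt_intervalIntegral_self_add hf s)).sub
    ((hasDerivAt_intervalIntegral_self_add hg s).const_mul T⁻¹)).congr_deriv ?_
  field_simp
  ring

end Shift

theorem stmt_9_general (n : ℕ) (T : ℝ) (hT : 0 < T)
    (ImF : EuclideanSpace ℝ (Fin (2 * n)) →L[ℝ] EuclideanSpace ℝ (Fin (2 * n)))
    (Bq : EuclideanSpace ℝ (Fin (2 * n)) →ₗ[ℝ] EuclideanSpace ℝ (Fin (2 * n)) →ₗ[ℝ] ℝ)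
    (X : EuclideanSpace ℝ (Fin (2 * n))) :
    HasDerivAt
      (fun s : ℝ =>
        -∫ t : ℝ, Jfun (-t / T) *
          Bq (NormedSpace.exp ((2 * t) • ImF) (NormedSpace.exp ((2 * s) • ImF) X))
             (NormedSpace.exp ((2 * t) • ImF) (NormedSpace.exp ((2 * s) • ImF) X)))
      ((1 / T) * (∫ t in (0:ℝ)..T,
          Bq (NormedSpace.exp ((2 * t) • ImF) X) (NormedSpace.exp ((2 * t) • ImF) X))
        - Bq X X)
      0 := by
  have hflow : ∀ t s : ℝ, exp ((2 * t) • ImF) (exp ((2 * s) • ImF) X)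
      = exp ((2 * (t + s)) • ImF) X := by
    intro t s
    rw [mul_add, exp_add_smul ImF (2 * t) (2 * s)]
    rfl
  have hcont : Continuous fun u : ℝ => exp ((2 * u) • ImF) X :=
    ((differentiable_exp_smul_const ℝ ImF).continuous.comp
      (continuous_const.mul continuous_id)).clm_apply continuous_const
  have hf := (Bq.toContinuousBilinearMap.continuous.comp hcont).clm_apply hcont
  simp_rw [hflow]
  simpa [one_div, zero_smul ℝ ImF, exp_zero] using
    hasDerivAt_neg_integral_Jfun_mul_comp_add hf hT 0

/-- Let `q` be a complex quadratic form on `ℝ^{2n}` with `Re q ≥ 0` (with polarization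
`Bq` of `Re q`, so `Re q(X) = Bq X X`), and let `Im F` be the imaginary part of its
Hamilton map, so that `e^{tH_{Im q}} = e^{2t Im F}`.  For `T > 0`, set
`G(X) = −∫ J(−t/T) Re q(e^{tH_{Im q}}X) dt`.  Then
`H_{Im q}G = ⟨Re q⟩_{T,Im q} − Re q`, where `H_{Im q}G(X)` is the derivative at `s = 0` of
`s ↦ G(e^{sH_{Im q}}X)` and `⟨Re q⟩_{T,Im q}(X) = (1/T)∫₀^T Re q(e^{tH_{Im q}}X) dt`. -/
theorem stmt_9 (n : ℕ) (T : ℝ) (hT : 0 < T)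
    (ImF : EuclideanSpace ℝ (Fin (2 * n)) →L[ℝ] EuclideanSpace ℝ (Fin (2 * n)))
    (Bq : EuclideanSpace ℝ (Fin (2 * n)) →ₗ[ℝ] EuclideanSpace ℝ (Fin (2 * n)) →ₗ[ℝ] ℝ)
    (hBsymm : ∀ X Y, Bq X Y = Bq Y X)
    (hpos : ∀ X, 0 ≤ Bq X X)
    (X : EuclideanSpace ℝ (Fin (2 * n))) :
    HasDerivAt
      (fun s : ℝ =>
        -∫ t : ℝ, Jfun (-t / T) *
          Bq (NormedSpace.exp ((2 * t) • ImF) (NormedSpace.exp ((2 * s) • ImF) X))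
             (NormedSpace.exp ((2 * t) • ImF) (NormedSpace.exp ((2 * s) • ImF) X)))
      ((1 / T) * (∫ t in (0:ℝ)..T,
          Bq (NormedSpace.exp ((2 * t) • ImF) X) (NormedSpace.exp ((2 * t) • ImF) X))
        - Bq X X)
      0 :=
  stmt_9_general n T hT ImF Bq X
end

section
/- Let p₀ ∈ C^∞(ℝ^{2n}) satisfy p₀(0) = 0, dp₀(0) = 0, p₀(X) = q(X) + O(|X|³) as X → 0 with q a quadratic form, and suppose the flows e^{tH_{Im p₀}} and e^{tH_{Im q}} satisfy |e^{tH_{Im p₀}}X| ≤ e^{Ct}|X| and |e^{tH_{Im p₀}}X − e^{tH_{Im q}}X| ≤ c̃ t|X|² for 0 ≤ t ≤ T. Then for each fixed T > 0, the time averages satisfy ⟨Re p₀⟩_{T,Im p₀}(X) = ⟨Re q⟩_{T,Im q}(X) + O(|X|³) as X → 0, where ⟨f⟩_{T,b}(X) = (1/T)∫₀^T f(e^{tH_b}X) dt. -/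
/-!
Along the flow `φ_t X` stays in a ball of radius `e^{|C|T}|X|`, so the Taylor remainder of
`Re p₀` at `φ_t X` is `O(|X|³)`; the polar bound on the quadratic form turns the `O(|X|²)` gap
between the two flows, measured at points of size `O(|X|)`, into another `O(|X|³)`. The pointwise
bound is uniform in `t ∈ [0, T]` and therefore survives time averaging.
-/

open MeasureTheory

theorem continuous_of_abs_sub_le_mul_norm_sub {E : Type*} [SeminormedAddCommGroup E]
    {f : E → ℝ} {c : ℝ} (hf : ∀ X Y, |f X - f Y| ≤ c * (‖X‖ + ‖Y‖) * ‖X - Y‖) :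
    Continuous f := by
  refine continuous_iff_continuousAt.2 fun X => tendsto_iff_dist_tendsto_zero.2 ?_
  have hbound := (show Continuous fun Y => c * (‖Y‖ + ‖X‖) * ‖Y - X‖ by fun_prop).tendsto X
  rw [sub_self, norm_zero, mul_zero] at hbound
  exact squeeze_zero (fun _ => dist_nonneg) (fun Y => (Real.dist_eq _ _).trans_le (hf Y X)) hbound

theorem abs_sub_le_of_taylor_of_polar {E : Type*} [SeminormedAddCommGroup E]
    {Rp Rq : E → ℝ} {C₁ C₂ r M L s : ℝ} {u v : E}
    (hlip : ∀ X Y, |Rq X - Rq Y| ≤ C₂ * (‖X‖ + ‖Y‖) * ‖X - Y‖)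
    (htaylor : ∀ X, ‖X‖ ≤ r → |Rp X - Rq X| ≤ C₁ * ‖X‖ ^ 3)
    (hL : 0 ≤ L) (hs0 : 0 ≤ s) (hs1 : s ≤ 1) (hur : ‖u‖ ≤ r) (hu : ‖u‖ ≤ M * s)
    (huv : ‖u - v‖ ≤ L * s ^ 2) :
    |Rp u - Rq v| ≤ (|C₁| * M ^ 3 + |C₂| * (2 * M + L) * L) * s ^ 3 := by
  have hv : ‖v‖ ≤ (M + L) * s := by
    calc ‖v‖ ≤ ‖u‖ + ‖u - v‖ := by simpa using norm_sub_le u (u - v)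
      _ ≤ M * s + L * s ^ 2 := add_le_add hu huv
      _ ≤ (M + L) * s := by nlinarith [mul_le_mul_of_nonneg_left hs1 (mul_nonneg hL hs0)]
  have hTaylor : |Rp u - Rq u| ≤ |C₁| * M ^ 3 * s ^ 3 := by
    calc |Rp u - Rq u| ≤ C₁ * ‖u‖ ^ 3 := htaylor u hur
      _ ≤ |C₁| * (M * s) ^ 3 := by
          gcongr
          exact le_abs_self C₁
      _ = |C₁| * M ^ 3 * s ^ 3 := by ring
  have hPolar : |Rq u - Rq v| ≤ |C₂| * (2 * M + L) * L * s ^ 3 := by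
    calc |Rq u - Rq v| ≤ C₂ * (‖u‖ + ‖v‖) * ‖u - v‖ := hlip u v
      _ ≤ |C₂| * (‖u‖ + ‖v‖) * ‖u - v‖ := by gcongr; exact le_abs_self C₂
      _ ≤ |C₂| * ((2 * M + L) * s) * (L * s ^ 2) := by
          have hsum : ‖u‖ + ‖v‖ ≤ (2 * M + L) * s := by linarith
          exact mul_le_mul (mul_le_mul_of_nonneg_left hsum (abs_nonneg _)) huv (norm_nonneg _)
            (mul_nonneg (abs_nonneg _) ((add_nonneg (norm_nonneg u) (norm_nonneg v)).trans hsum))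
      _ = |C₂| * (2 * M + L) * L * s ^ 3 := by ring
  calc |Rp u - Rq v| ≤ |Rp u - Rq u| + |Rq u - Rq v| := abs_sub_le _ _ _
    _ ≤ _ := by linarith

theorem abs_intervalAverage_sub_le {f g : ℝ → ℝ} {T B : ℝ} (hT : 0 < T)
    (hf : ContinuousOn f (Set.Icc 0 T)) (hg : ContinuousOn g (Set.Icc 0 T))
    (hfg : ∀ t ∈ Set.Icc 0 T, |f t - g t| ≤ B) :
    |(1 / T) * (∫ t in (0:ℝ)..T, f t) - (1 / T) * ∫ t in (0:ℝ)..T, g t| ≤ B := by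
  rw [← Set.uIcc_of_le hT.le] at hf hg
  have hint : |∫ t in (0:ℝ)..T, f t - g t| ≤ B * T := by
    simpa [abs_of_pos hT] using intervalIntegral.norm_integral_le_of_norm_le_const
      (a := 0) (b := T) (f := fun t => f t - g t) (C := B) fun t ht => by
        simpa only [Real.norm_eq_abs] using
          hfg t (Set.Ioc_subset_Icc_self (Set.uIoc_of_le hT.le ▸ ht))
  rw [← mul_sub, ← intervalIntegral.integral_sub hf.intervalIntegrable hg.intervalIntegrable,
    abs_mul, abs_of_pos (one_div_pos.2 hT), one_div_mul_eq_div, div_le_iff₀ hT]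
  exact hint

theorem mul_le_abs_mul_of_mem_Icc {c t T : ℝ} (ht : t ∈ Set.Icc 0 T) : c * t ≤ |c| * T :=
  (mul_le_mul_of_nonneg_right (le_abs_self c) ht.1).trans
    (mul_le_mul_of_nonneg_left ht.2 (abs_nonneg c))

/-- Let `Rp = Re p₀` with `p₀(0) = 0`, `dp₀(0) = 0`, and `Rp(X) = Rq(X) + O(|X|³)` as
`X → 0`, `Rq = Re q` a quadratic form (with the polar bound
`|Rq X − Rq Y| ≤ C₂(|X|+|Y|)|X−Y|`).  Suppose the flows `φ = e^{tH_{Im p₀}}` and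
`ψ = e^{tH_{Im q}}` satisfy `|φ_t X| ≤ e^{Ct}|X|` and `|φ_t X − ψ_t X| ≤ c̃ t |X|²` on
`[0,T]`.  Then `⟨Rp⟩_{T,Im p₀}(X) = ⟨Rq⟩_{T,Im q}(X) + O(|X|³)` as `X → 0`, where
`⟨f⟩(X) = (1/T)∫₀^T f(flow_t X) dt`. -/
theorem stmt_12 (n : ℕ) (T C ctilde C₁ C₂ r : ℝ) (hT : 0 < T) (hr : 0 < r)
    (Rp Rq : EuclideanSpace ℝ (Fin (2 * n)) → ℝ)
    (φ ψ : ℝ → EuclideanSpace ℝ (Fin (2 * n)) → EuclideanSpace ℝ (Fin (2 * n)))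
    (hRpcont : Continuous Rp)
    (hφcont : ∀ X, ContinuousOn (fun t => φ t X) (Set.Icc 0 T))
    (hψcont : ∀ X, ContinuousOn (fun t => ψ t X) (Set.Icc 0 T))
    (hlip : ∀ X Y, |Rq X - Rq Y| ≤ C₂ * (‖X‖ + ‖Y‖) * ‖X - Y‖)
    (htaylor : ∀ X, ‖X‖ ≤ r → |Rp X - Rq X| ≤ C₁ * ‖X‖ ^ 3)
    (hφbd : ∀ t ∈ Set.Icc (0:ℝ) T, ∀ X, ‖φ t X‖ ≤ Real.exp (C * t) * ‖X‖)
    (hdiff : ∀ t ∈ Set.Icc (0:ℝ) T, ∀ X, ‖φ t X - ψ t X‖ ≤ ctilde * t * ‖X‖ ^ 2) :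
    ∃ K > 0, ∃ r' > 0, ∀ X, ‖X‖ ≤ r' →
      |(1 / T) * (∫ t in (0:ℝ)..T, Rp (φ t X)) - (1 / T) * ∫ t in (0:ℝ)..T, Rq (ψ t X)|
        ≤ K * ‖X‖ ^ 3 := by
  set M := Real.exp (|C| * T)
  set L := |ctilde| * T
  have hM : 0 < M := Real.exp_pos _
  set D := |C₁| * M ^ 3 + |C₂| * (2 * M + L) * L
  refine ⟨D + 1, by positivity, min 1 (r / M), lt_min one_pos (div_pos hr hM), fun X hX => ?_⟩
  have hφM : ∀ t ∈ Set.Icc (0:ℝ) T, ‖φ t X‖ ≤ M * ‖X‖ := fun t ht =>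
    (hφbd t ht X).trans (mul_le_mul_of_nonneg_right
      (Real.exp_le_exp.2 (mul_le_abs_mul_of_mem_Icc ht)) (norm_nonneg X))
  have hφr : ∀ t ∈ Set.Icc (0:ℝ) T, ‖φ t X‖ ≤ r := fun t ht =>
    (hφM t ht).trans ((le_div_iff₀' hM).1 (hX.trans (min_le_right _ _)))
  have hφψ : ∀ t ∈ Set.Icc (0:ℝ) T, ‖φ t X - ψ t X‖ ≤ L * ‖X‖ ^ 2 := fun t ht =>
    (hdiff t ht X).trans
      (mul_le_mul_of_nonneg_right (mul_le_abs_mul_of_mem_Icc ht) (by positivity))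
  have hpt : ∀ t ∈ Set.Icc (0:ℝ) T, |Rp (φ t X) - Rq (ψ t X)| ≤ D * ‖X‖ ^ 3 := fun t ht =>
    abs_sub_le_of_taylor_of_polar hlip htaylor (by positivity) (norm_nonneg X)
      (hX.trans (min_le_left _ _)) (hφr t ht) (hφM t ht) (hφψ t ht)
  have hRqcont : Continuous Rq := continuous_of_abs_sub_le_mul_norm_sub hlip
  calc _ ≤ D * ‖X‖ ^ 3 := abs_intervalAverage_sub_le hT (hRpcont.comp_continuousOn (hφcont X))
        (hRqcont.comp_continuousOn (hψcont X)) hpt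
    _ ≤ (D + 1) * ‖X‖ ^ 3 := by gcongr; exact (lt_add_one D).le
end

section
/- Let q be a quadratic form on ℝ^{2n} decomposed as q(X', X'') = q|_{S^{σ⊥}}(X') + q|_S(X'') where ⟨Re q|_{S^{σ⊥}}⟩_{T,Im q|_{S^{σ⊥}}} is positive definite on ℝ^{2n'} for some T > 0. Suppose moreover |e^{tH_{Im q|_{S^{σ⊥}}}}X'| ≤ e^{Ct}|X'| for all t ∈ ℝ. Then the degree-0 homogeneous function f(X) = (1/T)∫₀^T [Re q(e^{tH_{Im q}}X) / |e^{tH_{Im q}}X|²] dt satisfies f(X) ≥ (1/C')·|X'|²/|X|² for some C' > 0 and all X = (X',X'') ≠ 0; in particular f(X) = 0 forces X' = 0. -/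
open MeasureTheory Set

/- For `t ∈ [0, T]` we have `0 < ‖Φ_t X‖² ≤ e^{2CT}‖X‖²`, so dividing by `‖Φ_t X‖²` instead of
this constant only increases the integrand. Since `Re q(Φ_t X) = Re q'(ψ'_t X')`, the integral of the
numerators is `T` times the time average of `Re q'`, which is at least `cT‖X'‖²`. -/

lemma integral_div_const_le_integral_div {f w : ℝ → ℝ} {a b M : ℝ} (hab : a ≤ b)
    (hf : ContinuousOn f (Icc a b)) (hw : ContinuousOn w (Icc a b))
    (hf0 : ∀ t ∈ Icc a b, 0 ≤ f t) (hw0 : ∀ t ∈ Icc a b, 0 < w t)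
    (hwM : ∀ t ∈ Icc a b, w t ≤ M) :
    (∫ t in a..b, f t) / M ≤ ∫ t in a..b, f t / w t := by
  rw [← intervalIntegral.integral_div]
  refine intervalIntegral.integral_mono_on hab ?_ ?_ fun t ht => ?_
  · exact (hf.intervalIntegrable_of_Icc hab).div_const M
  · exact (hf.div hw fun t ht => (hw0 t ht).ne').intervalIntegrable_of_Icc hab
  · exact div_le_div_of_nonneg_left (hf0 t ht) (hw0 t ht) (hwM t ht)

lemma sq_norm_le_exp_mul_sq_norm {E F : Type*} [SeminormedAddCommGroup E]
    [SeminormedAddCommGroup F] {x : E} {y : F} {C t T : ℝ} (hC : 0 ≤ C) (htT : t ≤ T)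
    (h : ‖y‖ ≤ Real.exp (C * t) * ‖x‖) :
    ‖y‖ ^ 2 ≤ Real.exp (2 * C * T) * ‖x‖ ^ 2 :=
  calc ‖y‖ ^ 2 ≤ (Real.exp (C * T) * ‖x‖) ^ 2 := by
        gcongr
        exact h.trans (by gcongr)
    _ = Real.exp (2 * C * T) * ‖x‖ ^ 2 := by
        rw [mul_pow, ← Real.exp_nat_mul]
        ring_nf

theorem stmt_14_general (n' n'' : ℕ) (T C : ℝ) (hT : 0 < T) (hC : 0 < C)
    (Rq : EuclideanSpace ℝ (Fin (2 * n')) × EuclideanSpace ℝ (Fin (2 * n'')) → ℝ)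
    (Rq' : EuclideanSpace ℝ (Fin (2 * n')) → ℝ)
    (ψ' : ℝ → EuclideanSpace ℝ (Fin (2 * n')) → EuclideanSpace ℝ (Fin (2 * n')))
    (Φ : ℝ → EuclideanSpace ℝ (Fin (2 * n')) × EuclideanSpace ℝ (Fin (2 * n'')) →
      EuclideanSpace ℝ (Fin (2 * n')) × EuclideanSpace ℝ (Fin (2 * n'')))
    (hfact : ∀ t X, Rq (Φ t X) = Rq' (ψ' t X.1))
    (hRq'pos : ∀ X', 0 ≤ Rq' X')
    (hΦup : ∀ t ∈ Set.Icc (0:ℝ) T, ∀ X, ‖Φ t X‖ ≤ Real.exp (C * t) * ‖X‖)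
    (hΦlow : ∀ t ∈ Set.Icc (0:ℝ) T, ∀ X, ‖X‖ ≤ Real.exp (C * t) * ‖Φ t X‖)
    (havg : ∃ c > 0, ∀ X', c * ‖X'‖ ^ 2 ≤ (1 / T) * ∫ t in (0:ℝ)..T, Rq' (ψ' t X'))
    (hΦcont : ∀ X, ContinuousOn (fun t => Φ t X) (Set.Icc 0 T))
    (hRqcont : Continuous Rq) :
    ∃ C' > 0, ∀ X : EuclideanSpace ℝ (Fin (2 * n')) × EuclideanSpace ℝ (Fin (2 * n'')),
      X ≠ 0 →
      (‖X.1‖ ^ 2 / ‖X‖ ^ 2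
          ≤ C' * ((1 / T) * ∫ t in (0:ℝ)..T, Rq (Φ t X) / ‖Φ t X‖ ^ 2)) ∧
      (((1 / T) * ∫ t in (0:ℝ)..T, Rq (Φ t X) / ‖Φ t X‖ ^ 2) = 0 → X.1 = 0) := by
  obtain ⟨c, hc, hcavg⟩ := havg
  refine ⟨Real.exp (2 * C * T) / c, by positivity, fun X hX => ?_⟩
  have hX : 0 < ‖X‖ := norm_pos_iff.mpr hX
  have hΦX : ∀ t ∈ Icc 0 T, 0 < ‖Φ t X‖ ^ 2 := fun t ht =>
    pow_pos (pos_of_mul_pos_right (hX.trans_le (hΦlow t ht X)) (Real.exp_pos _).le) 2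
  have hcompare : (∫ t in (0:ℝ)..T, Rq' (ψ' t X.1)) / (Real.exp (2 * C * T) * ‖X‖ ^ 2)
      ≤ ∫ t in (0:ℝ)..T, Rq (Φ t X) / ‖Φ t X‖ ^ 2 := by
    simp_rw [← hfact]
    exact integral_div_const_le_integral_div hT.le (hRqcont.comp_continuousOn (hΦcont X))
      ((hΦcont X).norm.pow 2) (fun t _ => hfact t X ▸ hRq'pos _) hΦX
      fun t ht => sq_norm_le_exp_mul_sq_norm hC.le ht.2 (hΦup t ht X)
  have hJ : c * ‖X.1‖ ^ 2 * T ≤ ∫ t in (0:ℝ)..T, Rq' (ψ' t X.1) :=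
    (le_div_iff₀ hT).1 (by simpa only [one_div_mul_eq_div] using hcavg X.1)
  have hbound : ‖X.1‖ ^ 2 / ‖X‖ ^ 2
      ≤ Real.exp (2 * C * T) / c * ((1 / T) * ∫ t in (0:ℝ)..T, Rq (Φ t X) / ‖Φ t X‖ ^ 2) :=
    calc ‖X.1‖ ^ 2 / ‖X‖ ^ 2
        = Real.exp (2 * C * T) / c * (1 / T) *
            (c * ‖X.1‖ ^ 2 * T / (Real.exp (2 * C * T) * ‖X‖ ^ 2)) := by
          field_simp
      _ ≤ Real.exp (2 * C * T) / c * (1 / T) * ((∫ t in (0:ℝ)..T, Rq' (ψ' t X.1)) /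
            (Real.exp (2 * C * T) * ‖X‖ ^ 2)) := by
          gcongr
      _ ≤ _ := by
          rw [mul_assoc]
          gcongr
  refine ⟨hbound, fun hzero => ?_⟩
  rw [hzero, mul_zero] at hbound
  have : ‖X.1‖ ^ 2 / ‖X‖ ^ 2 = 0 := le_antisymm hbound (by positivity)
  simpa [hX.ne'] using this

/-- Let `q(X',X'') = q|_{S^{σ⊥}}(X') + q|_S(X'')` be a quadratic form on
`ℝ^{2n'} × ℝ^{2n''}` with `Rq = Re q ≥ 0` satisfying, along the flows
(`Φ = e^{tH_{Im q}}`, `ψ' = e^{tH_{Im q|_{S^{σ⊥}}}}`),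
`Rq(Φ_t X) = Rq'(ψ'_t X')` where `Rq' = Re q|_{S^{σ⊥}}`, and suppose the time average
`(1/T)∫₀^T Rq'(ψ'_t X') dt ≥ c|X'|²` is positive definite.  Then the degree-0 homogeneous
function `f(X) = (1/T)∫₀^T Rq(Φ_t X)/|Φ_t X|² dt` satisfies
`f(X) ≥ (1/C')|X'|²/|X|²` for `X ≠ 0`; in particular `f(X) = 0` forces `X' = 0`. -/
theorem stmt_14 (n' n'' : ℕ) (T C : ℝ) (hT : 0 < T) (hC : 0 < C)
    (Rq : EuclideanSpace ℝ (Fin (2 * n')) × EuclideanSpace ℝ (Fin (2 * n'')) → ℝ)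
    (Rq' : EuclideanSpace ℝ (Fin (2 * n')) → ℝ)
    (ψ' : ℝ → EuclideanSpace ℝ (Fin (2 * n')) → EuclideanSpace ℝ (Fin (2 * n')))
    (Φ : ℝ → EuclideanSpace ℝ (Fin (2 * n')) × EuclideanSpace ℝ (Fin (2 * n'')) →
      EuclideanSpace ℝ (Fin (2 * n')) × EuclideanSpace ℝ (Fin (2 * n'')))
    (hfact : ∀ t X, Rq (Φ t X) = Rq' (ψ' t X.1))
    (hRq'pos : ∀ X', 0 ≤ Rq' X')
    (hψ'bd : ∀ t : ℝ, ∀ X', ‖ψ' t X'‖ ≤ Real.exp (C * t) * ‖X'‖)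
    (hΦup : ∀ t ∈ Set.Icc (0:ℝ) T, ∀ X, ‖Φ t X‖ ≤ Real.exp (C * t) * ‖X‖)
    (hΦlow : ∀ t ∈ Set.Icc (0:ℝ) T, ∀ X, ‖X‖ ≤ Real.exp (C * t) * ‖Φ t X‖)
    (havg : ∃ c > 0, ∀ X', c * ‖X'‖ ^ 2 ≤ (1 / T) * ∫ t in (0:ℝ)..T, Rq' (ψ' t X'))
    (hΦcont : ∀ X, ContinuousOn (fun t => Φ t X) (Set.Icc 0 T))
    (hψ'cont : ∀ X', ContinuousOn (fun t => ψ' t X') (Set.Icc 0 T))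
    (hRqcont : Continuous Rq) (hRq'cont : Continuous Rq') :
    ∃ C' > 0, ∀ X : EuclideanSpace ℝ (Fin (2 * n')) × EuclideanSpace ℝ (Fin (2 * n'')),
      X ≠ 0 →
      (‖X.1‖ ^ 2 / ‖X‖ ^ 2
          ≤ C' * ((1 / T) * ∫ t in (0:ℝ)..T, Rq (Φ t X) / ‖Φ t X‖ ^ 2)) ∧
      (((1 / T) * ∫ t in (0:ℝ)..T, Rq (Φ t X) / ‖Φ t X‖ ^ 2) = 0 → X.1 = 0) :=
  stmt_14_general n' n'' T C hT hC Rq Rq' ψ' Φ hfact hRq'pos hΦup hΦlow havg hΦcont hRqcont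
end

section
/- Consider the Kramers–Fokker–Planck quadratic symbol q(x,v,ξ,η) = η² + v²/4 + i(vξ − a x η) on ℝ⁴ with a ∈ ℝ, a ≠ 0. Then Re q ≥ 0, q is not elliptic on ℝ⁴ (it has nonzero real zeros), but its singular space S = (⋂_{j=0}^{3} Ker[Re F (Im F)^j]) ∩ ℝ⁴ is {0}, where F is the Hamilton map of q. -/
/-- The canonical symplectic form on `ℝ⁴` with coordinates `X = (x, v, ξ, η)`:
`σ(X, Y) = (ξ,η)·(y,w) − (x,v)·(ζ,θ)`. -/
def sigma4 (X Y : ℝ × ℝ × ℝ × ℝ) : ℝ :=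
  X.2.2.1 * Y.1 + X.2.2.2 * Y.2.1 - X.1 * Y.2.2.1 - X.2.1 * Y.2.2.2

/-! The Hamilton maps are recovered from their polarizations because `σ` is nondegenerate;
the singular space is then cut out by `Re F` and `Re F ∘ Im F` alone, since
`Ker Re F = {v = η = 0}` and `Re F ∘ Im F` reads off `ξ` and `a x` there. -/

theorem sigma4_ext {Y Z : ℝ × ℝ × ℝ × ℝ} (h : ∀ X, sigma4 X Y = sigma4 X Z) : Y = Z := by
  have h₁ := h (0, 0, 1, 0)
  have h₂ := h (0, 0, 0, 1)
  have h₃ := h (-1, 0, 0, 0)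
  have h₄ := h (0, -1, 0, 0)
  simp only [sigma4] at h₁ h₂ h₃ h₄
  ext <;> linarith

theorem hamiltonRe_apply {F₁ : ℝ × ℝ × ℝ × ℝ → ℝ × ℝ × ℝ × ℝ}
    (hF₁ : ∀ X Y : ℝ × ℝ × ℝ × ℝ, sigma4 X (F₁ Y) = X.2.2.2 * Y.2.2.2 + X.2.1 * Y.2.1 / 4)
    (Y : ℝ × ℝ × ℝ × ℝ) : F₁ Y = (0, Y.2.2.2, 0, -(Y.2.1 / 4)) :=
  sigma4_ext fun X => by rw [hF₁]; simp only [sigma4]; ring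

theorem hamiltonIm_apply {a : ℝ} {F₂ : ℝ × ℝ × ℝ × ℝ → ℝ × ℝ × ℝ × ℝ}
    (hF₂ : ∀ X Y : ℝ × ℝ × ℝ × ℝ, sigma4 X (F₂ Y) =
      (X.2.1 * Y.2.2.1 + X.2.2.1 * Y.2.1) / 2 - a * (X.1 * Y.2.2.2 + X.2.2.2 * Y.1) / 2)
    (Y : ℝ × ℝ × ℝ × ℝ) :
    F₂ Y = (Y.2.1 / 2, -(a * Y.1 / 2), a * Y.2.2.2 / 2, -(Y.2.2.1 / 2)) :=
  sigma4_ext fun X => by rw [hF₂]; simp only [sigma4]; ring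

/-- Consider the Kramers–Fokker–Planck quadratic symbol
`q(x,v,ξ,η) = η² + v²/4 + i(vξ − a x η)` on `ℝ⁴` with `a ≠ 0`, whose Hamilton map is
`F = F₁ + i F₂` with `σ(X, F₁ Y)`, `σ(X, F₂ Y)` the polarizations of `Re q`, `Im q`.
Then `Re q ≥ 0`, `q` is not elliptic on `ℝ⁴` (it has a nonzero real zero), but its
singular space `S = ⋂_{j=0}^{3} Ker[Re F (Im F)^j] ∩ ℝ⁴` is `{0}`. -/
theorem stmt_19 (a : ℝ) (ha : a ≠ 0)
    (F₁ F₂ : (ℝ × ℝ × ℝ × ℝ) →ₗ[ℝ] (ℝ × ℝ × ℝ × ℝ))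
    (hF₁ : ∀ X Y : ℝ × ℝ × ℝ × ℝ,
      sigma4 X (F₁ Y) = X.2.2.2 * Y.2.2.2 + X.2.1 * Y.2.1 / 4)
    (hF₂ : ∀ X Y : ℝ × ℝ × ℝ × ℝ,
      sigma4 X (F₂ Y) =
        (X.2.1 * Y.2.2.1 + X.2.2.1 * Y.2.1) / 2 - a * (X.1 * Y.2.2.2 + X.2.2.2 * Y.1) / 2) :
    (∀ X : ℝ × ℝ × ℝ × ℝ, 0 ≤ X.2.2.2 ^ 2 + X.2.1 ^ 2 / 4) ∧
    (∃ X : ℝ × ℝ × ℝ × ℝ, X ≠ 0 ∧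
        ((X.2.2.2 ^ 2 + X.2.1 ^ 2 / 4 : ℝ) : ℂ) +
            Complex.I * ((X.2.1 * X.2.2.1 - a * X.1 * X.2.2.2 : ℝ) : ℂ) = 0) ∧
    (∀ X : ℝ × ℝ × ℝ × ℝ, (∀ j < 4, F₁ ((F₂ ^ j) X) = 0) → X = 0) := by
  refine ⟨fun X => by positivity, ⟨(1, 0, 0, 0), by simp, by simp⟩, ?_⟩
  rintro ⟨x, v, ξ, η⟩ h
  have h₀ := h 0 (by norm_num)
  have h₁ := h 1 (by norm_num)
  rw [pow_zero, Module.End.one_apply, hamiltonRe_apply hF₁] at h₀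
  rw [pow_one, hamiltonIm_apply hF₂, hamiltonRe_apply hF₁] at h₁
  simp only [Prod.mk_eq_zero, neg_eq_zero] at h₀ h₁
  obtain ⟨-, hη, -, hv⟩ := h₀
  obtain ⟨-, hξ, -, hx⟩ := h₁
  have hax : a * x = 0 := by linarith
  simp only [Prod.mk_eq_zero]
  exact ⟨(mul_eq_zero.1 hax).resolve_left ha, by linarith, by linarith, hη⟩
end
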